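/- arXiv:2108.10731 — 2 statements merged into one kernel-verified Lean document; each statement's English description precedes it below -/
import Mathlib

section
/- Given η > 0 and h ∈ ℕ, there exists an integer q such that the following holds. If A is an η-dense reduced hypergraph with index set [q], vertex classes P^{ij} and constituents A^{ijk}, then (i) there are indices λ(1) < ⋯ < λ(h) in [q], and (ii) for each pair 1 ≤ r < s ≤ h there are three vertices P^{λ(r)λ(s)}_red, P^{λ(r)λ(s)}_blue and P^{λ(r)λ(s)}_green in P^{λ(r)λ(s)} such that for every triple of indices 1 ≤ r < s < t ≤ h, the three vertices P^{λ(r)λ(s)}_red, P^{λ(r)λ(t)}_blue and P^{λ(s)λ(t)}_green form a hyperedge of A^{λ(r)λ(s)λ(t)}. -/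
/-- A reduced hypergraph with index set `{0, 1, …, q−1}`: pairwise disjoint
nonempty vertex classes `P i j` (for distinct indices `i ≠ j`, with `P i j = P j i`)
and, for each triple `i < j < l`, a 3-partite 3-graph (constituent) whose edges
are triples with one vertex in each of `P i j`, `P i l`, `P j l`. -/
structure ReducedHG (q : ℕ) where
  P : ℕ → ℕ → Finset ℕ
  A : ℕ → ℕ → ℕ → Finset (ℕ × ℕ × ℕ)
  P_symm : ∀ i j, P i j = P j i
  P_nonempty : ∀ i j, i < q → j < q → i ≠ j → (P i j).Nonempty
  P_disjoint : ∀ i j i' j', i < j → j < q → i' < j' → j' < q →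
    (i, j) ≠ (i', j') → Disjoint (P i j) (P i' j')
  A_sub : ∀ i j l, i < j → j < l → l < q →
    ∀ e ∈ A i j l, e.1 ∈ P i j ∧ e.2.1 ∈ P i l ∧ e.2.2 ∈ P j l

/-- A reduced hypergraph is `η`-dense if each constituent has at least an
`η`-fraction of all possible edges. -/
def ReducedHG.Dense {q : ℕ} (R : ReducedHG q) (η : ℝ) : Prop :=
  ∀ i j l, i < j → j < l → l < q →
    η * ((R.P i j).card : ℝ) * ((R.P i l).card : ℝ) * ((R.P j l).card : ℝ) ≤
      ((R.A i j l).card : ℝ)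

/-!
The red vertices are chosen greedily: running through the indices in increasing order, each new
index `a` gets, for every index `c` chosen before it, a vertex `red c a ∈ P^{ca}` whose link in
`A^{cat}` is `η/2`-dense for every `t` in a reservoir of later indices; averaging shows the
reservoir only shrinks by the factor `(η/2)^{#C}`. At a fixed top index `t` the links of the red
vertices form an `η/2`-dense system of bipartite graphs between the classes `P^{rt}`, and the same
greedy argument one dimension lower, followed by pigeonhole for a common neighbour, finds blue and
green vertices for `h` of the indices below `t` inside any large enough pool. Hypergraph Ramsey,
colouring `h`-sets by the ranks at which this succeeds, makes these choices live on a single set of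
`h` indices.
-/

open Finset

section Rank

variable {ι : Type*} [LinearOrder ι] {D : Finset ι}

lemma card_filter_lt_lt_card {t : ι} (ht : t ∈ D) : #{s ∈ D | s < t} < #D :=
  card_lt_card (filter_ssubset.2 ⟨t, ht, lt_irrefl t⟩)

lemma strictMonoOn_card_filter_lt : StrictMonoOn (fun t => #{s ∈ D | s < t}) (D : Set ι) := by
  intro t₁ ht₁ t₂ _ h
  refine card_lt_card ⟨fun s hs => ?_, fun hsub => ?_⟩
  · rw [mem_filter] at hs ⊢
    exact ⟨hs.1, hs.2.trans h⟩
  · simpa using hsub (mem_filter.2 ⟨ht₁, h⟩)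

lemma exists_mem_card_filter_lt_eq {n : ℕ} (hn : n < #D) : ∃ t ∈ D, #{s ∈ D | s < t} = n := by
  have hsurj := surjOn_of_injOn_of_card_le (s := D) (t := range #D) (fun t => #{s ∈ D | s < t})
    (fun t ht => mem_coe.2 (mem_range.2 (card_filter_lt_lt_card ht)))
    strictMonoOn_card_filter_lt.injOn (by simp)
  simpa using hsurj (mem_coe.2 (mem_range.2 hn))

lemma exists_superset_filter_lt_eq {M K : Finset ι} {t : ι} {m : ℕ} (ht : t ∈ M)
    (hK : K ⊆ {s ∈ M | s < t}) (hKm : #K < m) (hm : #{s ∈ M | s < t} + m ≤ #M) :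
    ∃ D ⊆ M, #D = m ∧ t ∈ D ∧ {s ∈ D | s < t} = K := by
  set S := {s ∈ M | s < t}
  have hSM : insert t S ⊆ M := insert_subset ht (filter_subset _ _)
  have htS : t ∉ S := by simp [S]
  obtain ⟨U, hU, hUcard⟩ := exists_subset_card_eq (s := M \ insert t S) (n := m - 1 - #K)
    (by rw [card_sdiff_of_subset hSM, card_insert_of_notMem htS]; omega)
  have hUM : ∀ u ∈ U, u ∈ M ∧ t < u := fun u hu => by
    have := hU hu
    simp only [S, mem_sdiff, mem_insert, mem_filter, not_or, not_and, not_lt] at this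
    exact ⟨this.1, lt_of_le_of_ne (this.2.2 this.1) (Ne.symm this.2.1)⟩
  have hKt : ∀ k ∈ K, k ∈ M ∧ k < t := fun k hk => mem_filter.1 (hK hk)
  refine ⟨insert t (K ∪ U), insert_subset ht (union_subset (fun k hk => (hKt k hk).1)
    (fun u hu => (hUM u hu).1)), ?_, mem_insert_self _ _, ?_⟩
  · have hdisj : Disjoint K U := disjoint_left.2 fun x hxK hxU =>
      lt_asymm (hKt x hxK).2 (hUM x hxU).2
    have htKU : t ∉ K ∪ U := by
      simp only [mem_union, not_or]
      exact ⟨fun h => lt_irrefl t (hKt t h).2, fun h => lt_irrefl t (hUM t h).2⟩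
    rw [card_insert_of_notMem htKU, card_union_of_disjoint hdisj, hUcard]
    omega
  · ext x
    simp only [mem_filter, mem_insert, mem_union]
    constructor
    · rintro ⟨rfl | hxK | hxU, hxt⟩
      · exact absurd hxt (lt_irrefl x)
      · exact hxK
      · exact absurd hxt (lt_asymm (hUM x hxU).2)
    · intro hxK
      exact ⟨Or.inr (Or.inl hxK), (hKt x hxK).2⟩

end Rank

section Ramsey

def RamseyBound (ι κ : Type*) (k m N : ℕ) : Prop :=
  ∀ S : Finset ι, N ≤ #S → ∀ f : Finset ι → κ,
    ∃ M ⊆ S, #M = m ∧ ∃ c, ∀ A ⊆ M, #A = k → f A = c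

variable {ι : Type*} [LinearOrder ι]

lemma exists_endHomogeneous {κ : Type*} {k : ℕ} (ih : ∀ m, ∃ N, RamseyBound ι κ k m N) (j : ℕ) :
    ∃ N, ∀ S : Finset ι, N ≤ #S → ∀ f : Finset ι → κ, ∃ M ⊆ S, #M = j ∧
      ∃ c : ι → κ, ∀ a ∈ M, ∀ B ⊆ M, (∀ x ∈ B, a < x) → #B = k → f (insert a B) = c a := by
  induction j with
  | zero => exact ⟨0, fun S _ f => ⟨∅, empty_subset _, rfl, fun _ => f ∅, by simp⟩⟩
  | succ j ihj =>
    obtain ⟨Nj, hNj⟩ := ihj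
    obtain ⟨N, hN⟩ := ih Nj
    refine ⟨N + 1, fun S hS f => ?_⟩
    have hSne : S.Nonempty := card_pos.1 (by omega)
    set a := S.min' hSne
    have haS : a ∈ S := S.min'_mem hSne
    -- the colour of a `(k+1)`-set with minimum `a` is read off a `k`-colouring of `S \ {a}`
    obtain ⟨M₁, hM₁S, hM₁, c₁, hc₁⟩ := hN (S.erase a)
      (by rw [card_erase_of_mem haS]; omega) fun B => f (insert a B)
    obtain ⟨M, hMM₁, hM, c, hc⟩ := hNj M₁ hM₁.ge f
    have hMS : M ⊆ S.erase a := hMM₁.trans hM₁S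
    have haM : a ∉ M := fun h => notMem_erase a S (hMS h)
    refine ⟨insert a M, insert_subset haS (hMS.trans (erase_subset a S)),
      by rw [card_insert_of_notMem haM, hM], Function.update c a c₁, ?_⟩
    intro a' ha' B hB hBa' hBk
    have ha'a : a ≤ a' := S.min'_le a' ((insert_subset haS (hMS.trans (erase_subset a S))) ha')
    have hBM : B ⊆ M := fun x hx =>
      (mem_insert.1 (hB hx)).resolve_left fun h => (h ▸ ha'a).not_gt (hBa' x hx)
    rcases mem_insert.1 ha' with rfl | ha'M
    · rw [Function.update_self]
      exact hc₁ B (hBM.trans hMM₁) hBk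
    · rw [Function.update_of_ne (ne_of_mem_of_not_mem ha'M haM)]
      exact hc a' ha'M B hBM hBa' hBk

theorem hypergraph_ramsey (k : ℕ) (κ : Type*) [Fintype κ] (m : ℕ) :
    ∃ N, RamseyBound ι κ k m N := by
  classical
  induction k generalizing m with
  | zero =>
    refine ⟨m, fun S hS f => ?_⟩
    obtain ⟨M, hMS, hM⟩ := exists_subset_card_eq hS
    exact ⟨M, hMS, hM, f ∅, fun A _ hA => by rw [card_eq_zero.1 hA]⟩
  | succ k ih =>
    obtain ⟨N, hN⟩ := exists_endHomogeneous ih (Fintype.card κ * m)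
    refine ⟨N, fun S hS f => ?_⟩
    obtain ⟨M₀, hM₀S, hM₀, c, hc⟩ := hN S hS f
    obtain ⟨v, -, hv⟩ := exists_le_card_fiber_of_mul_le_card_of_maps_to (f := c)
      (fun _ _ => mem_univ _) ⟨f ∅, mem_univ _⟩ (by rw [card_univ, hM₀])
    obtain ⟨M, hMv, hM⟩ := exists_subset_card_eq hv
    have hMM₀ : M ⊆ M₀ := hMv.trans (filter_subset _ _)
    refine ⟨M, hMM₀.trans hM₀S, hM, v, fun A hAM hA => ?_⟩
    have hAne : A.Nonempty := card_pos.1 (by omega)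
    have hmin : A.min' hAne ∈ A := A.min'_mem hAne
    rw [← insert_erase hmin, hc _ (hMM₀ (hAM hmin)) _ ((erase_subset _ _).trans (hAM.trans hMM₀))
      (fun x hx => A.min'_lt_of_mem_erase_min' hAne hx) (by rw [card_erase_of_mem hmin, hA]; rfl)]
    exact (mem_filter.1 (hMv (hAM hmin))).2

end Ramsey

section Transfer

variable {ι : Type*} [LinearOrder ι]

theorem exists_subset_forall_filter_lt (n m : ℕ) :
    ∃ N, ∀ P : Finset ι → ι → Prop, (∀ t, Antitone (P · t)) → ∀ C : Finset ι, N ≤ #C →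
      (∀ S ⊆ C, #S = n → ∀ t ∈ C, (∀ s ∈ S, s < t) → ∃ K ⊆ S, #K = m ∧ P K t) →
      ∃ Λ ⊆ C, #Λ = m ∧ ∀ t ∈ Λ, P {s ∈ Λ | s < t} t := by
  obtain ⟨N, hN⟩ := hypergraph_ramsey (ι := ι) m (Fin m → Prop) (n + m)
  refine ⟨N, fun P hP C hC hpool => ?_⟩
  -- Colour `D` by the ranks at which `D` is solved. Each rank is realised by one `m`-subset of the
  -- monochromatic `M`, built around a point with `n` points of `M` below it, hence by all of them.
  obtain ⟨M, hMC, hM, c, hc⟩ := hN C hC fun D p =>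
    ∃ t ∈ D, #{s ∈ D | s < t} = p ∧ P {s ∈ D | s < t} t
  have hc_true : ∀ p, c p := by
    intro p
    have hp := p.isLt
    obtain ⟨t, htM, hrank⟩ := exists_mem_card_filter_lt_eq (D := M) (n := n) (by omega)
    obtain ⟨K, hKS, hK, hPK⟩ := hpool _ ((filter_subset _ _).trans hMC) hrank t (hMC htM)
      fun s hs => (mem_filter.1 hs).2
    obtain ⟨K', hK'K, hK'⟩ := exists_subset_card_eq (show (p : ℕ) ≤ #K by omega)
    obtain ⟨D, hDM, hD, htD, hDt⟩ :=
      exists_superset_filter_lt_eq (m := m) htM (hK'K.trans hKS) (by omega) (by omega)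
    rw [← hc D hDM hD]
    exact ⟨t, htD, by rw [hDt, hK'], by rw [hDt]; exact hP t hK'K hPK⟩
  obtain ⟨Λ, hΛM, hΛ⟩ := exists_subset_card_eq (show m ≤ #M by omega)
  refine ⟨Λ, hΛM.trans hMC, hΛ, fun t ht => ?_⟩
  have hrank : #{s ∈ Λ | s < t} < m := hΛ ▸ card_filter_lt_lt_card ht
  obtain ⟨t', ht', hrank', hPt'⟩ := (hc Λ hΛM hΛ).symm ▸ hc_true ⟨_, hrank⟩
  rwa [strictMonoOn_card_filter_lt.injOn ht' ht hrank'] at hPt'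

end Transfer

section Averaging

variable {α β γ ι : Type*}

lemma exists_le_card_bipartiteBelow (r : α → β → Prop) [∀ a b, Decidable (r a b)]
    {s : Finset α} {t : Finset β} (ht : t.Nonempty) {ε : ℝ}
    (h : ∀ a ∈ s, ε * #t ≤ #(t.bipartiteAbove r a)) :
    ∃ b ∈ t, ε * #s ≤ #(s.bipartiteBelow r b) := by
  by_contra! H
  have := card_nsmul_lt_card_nsmul_of_le_of_lt r ht h H
  simp only [nsmul_eq_mul] at this
  linarith

variable [DecidableEq α] [DecidableEq β]

lemma card_eq_sum_card_slice {V : Finset α} {Y : Finset β} {E : Finset (α × β)}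
    (hE : E ⊆ V ×ˢ Y) : #E = ∑ x ∈ V, #{y ∈ Y | (x, y) ∈ E} := by
  calc #E = #{e ∈ V ×ˢ Y | e ∈ E} := by rw [filter_mem_eq_inter, inter_eq_right.2 hE]
    _ = _ := by rw [card_filter, sum_product]; simp only [card_filter]

lemma le_card_filter_of_dense {V : Finset α} {Y : Finset β} {E : Finset (α × β)} {θ : ℝ}
    (hθ : 0 ≤ θ) (hY : Y.Nonempty) (hE : E ⊆ V ×ˢ Y) (hdense : θ * #V * #Y ≤ #E) :
    θ / 2 * #V ≤ #{x ∈ V | θ / 2 * #Y ≤ #{y ∈ Y | (x, y) ∈ E}} := by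
  set p : α → Prop := fun x => θ / 2 * #Y ≤ #{y ∈ Y | (x, y) ∈ E}
  have hY0 : (0 : ℝ) < #Y := by exact_mod_cast hY.card_pos
  have hsplit : (#E : ℝ) ≤ #{x ∈ V | p x} * #Y + #V * (θ / 2 * #Y) := by
    rw [card_eq_sum_card_slice hE, Nat.cast_sum, ← sum_filter_add_sum_filter_not V p]
    gcongr
    · calc ∑ x ∈ V with p x, (#{y ∈ Y | (x, y) ∈ E} : ℝ) ≤ #{x ∈ V | p x} • (#Y : ℝ) :=
            sum_le_card_nsmul _ _ _ fun x _ => by exact_mod_cast card_filter_le _ _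
        _ = _ := nsmul_eq_mul _ _
    · calc ∑ x ∈ V with ¬p x, (#{y ∈ Y | (x, y) ∈ E} : ℝ)
          ≤ #{x ∈ V | ¬p x} • (θ / 2 * #Y) :=
            sum_le_card_nsmul _ _ _ fun x hx => (not_le.1 (mem_filter.1 hx).2).le
        _ ≤ #V * (θ / 2 * #Y) := by
            rw [nsmul_eq_mul]
            gcongr
            exact filter_subset _ _
  have : θ / 2 * #V * #Y ≤ #{x ∈ V | p x} * #Y := by linarith
  exact le_of_mul_le_mul_right this hY0

lemma exists_mem_forall_dense_of_dense {V : Finset α} {T : Finset ι} {Y : ι → Finset β}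
    {E : ι → Finset (α × β)} {θ : ℝ} (hθ : 0 ≤ θ) (hV : V.Nonempty)
    (hY : ∀ t ∈ T, (Y t).Nonempty) (hE : ∀ t ∈ T, E t ⊆ V ×ˢ Y t)
    (hdense : ∀ t ∈ T, θ * #V * #(Y t) ≤ #(E t)) :
    ∃ x ∈ V, ∃ T' ⊆ T, θ / 2 * #T ≤ #T' ∧
      ∀ t ∈ T', θ / 2 * #(Y t) ≤ #{y ∈ Y t | (x, y) ∈ E t} := by
  obtain ⟨x, hx, hT'⟩ := exists_le_card_bipartiteBelow
    (fun t x => θ / 2 * #(Y t) ≤ #{y ∈ Y t | (x, y) ∈ E t}) hV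
    fun t ht => le_card_filter_of_dense hθ (hY t ht) (hE t ht) (hdense t ht)
  exact ⟨x, hx, _, filter_subset _ _, hT', fun t ht => (mem_filter.1 ht).2⟩

lemma exists_forall_mem_forall_dense_of_dense [Nonempty α] [DecidableEq γ] (C : Finset γ)
    {V : γ → Finset α} {T : Finset ι} {Y : γ → ι → Finset β} {E : γ → ι → Finset (α × β)}
    {θ : ℝ} (hθ : 0 ≤ θ) (hV : ∀ c ∈ C, (V c).Nonempty) (hY : ∀ c ∈ C, ∀ t ∈ T, (Y c t).Nonempty)
    (hE : ∀ c ∈ C, ∀ t ∈ T, E c t ⊆ V c ×ˢ Y c t)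
    (hdense : ∀ c ∈ C, ∀ t ∈ T, θ * #(V c) * #(Y c t) ≤ #(E c t)) :
    ∃ x : γ → α, ∃ T' ⊆ T, (θ / 2) ^ #C * #T ≤ #T' ∧
      ∀ c ∈ C, x c ∈ V c ∧ ∀ t ∈ T', θ / 2 * #(Y c t) ≤ #{y ∈ Y c t | (x c, y) ∈ E c t} := by
  induction C using Finset.induction_on with
  | empty => exact ⟨fun _ => Classical.arbitrary α, T, subset_rfl, by simp, by simp⟩
  | @insert a C haC ih =>
    obtain ⟨x, T₁, hT₁T, hT₁, hx⟩ := ih (fun c hc => hV c (mem_insert_of_mem hc))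
      (fun c hc => hY c (mem_insert_of_mem hc)) (fun c hc => hE c (mem_insert_of_mem hc))
      fun c hc => hdense c (mem_insert_of_mem hc)
    have ha := mem_insert_self a C
    obtain ⟨y, hy, T₂, hT₂T₁, hT₂, hyT₂⟩ := exists_mem_forall_dense_of_dense hθ (hV a ha)
      (fun t ht => hY a ha t (hT₁T ht)) (fun t ht => hE a ha t (hT₁T ht))
      fun t ht => hdense a ha t (hT₁T ht)
    refine ⟨Function.update x a y, T₂, hT₂T₁.trans hT₁T, ?_, fun c hc => ?_⟩
    · calc (θ / 2) ^ #(insert a C) * #T = θ / 2 * ((θ / 2) ^ #C * #T) := by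
            rw [card_insert_of_notMem haC, pow_succ]; ring
        _ ≤ θ / 2 * #T₁ := by gcongr
        _ ≤ #T₂ := hT₂
    · rcases mem_insert.1 hc with rfl | hcC
      · rw [Function.update_self]
        exact ⟨hy, hyT₂⟩
      · rw [Function.update_of_ne (ne_of_mem_of_not_mem hcC haC)]
        exact ⟨(hx c hcC).1, fun t ht => (hx c hcC).2 t (hT₂T₁ ht)⟩

end Averaging

section Greedy

variable {ι σ : Type*} [LinearOrder ι]

noncomputable def greedyBound (θ : ℕ → ℝ) : ℕ → ℕ → ℕ
  | 0, _ => 0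
  | n + 1, c => ⌈(greedyBound θ n (c + 1) : ℝ) / θ c⌉₊ + 1

lemma mem_of_mem_insert_union_of_lt {C T : Finset ι} {a t : ι} (hCa : ∀ c ∈ C, c < a)
    (ht : t ∈ insert a C ∪ T) (hat : a < t) : t ∈ T := by
  rcases mem_union.1 ht with ht | ht
  · rcases mem_insert.1 ht with rfl | htC
    · exact absurd hat (lt_irrefl t)
    · exact absurd (hCa t htC) hat.not_gt
  · exact ht

lemma insert_union_subset_union_insert {C T T' : Finset ι} (a : ι) (hT' : T' ⊆ T) :
    insert a C ∪ T' ⊆ C ∪ insert a T := by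
  intro x hx
  simp only [mem_union, mem_insert] at hx ⊢
  rcases hx with (rfl | hx) | hx
  · exact Or.inr (Or.inl rfl)
  · exact Or.inl hx
  · exact Or.inr (Or.inr (hT' hx))

/-- `C` is the chosen set, `T` the reservoir of later candidates and `d` the data attached to `C`;
each step moves the least candidate `a` into `C` and keeps a `θ #C`-fraction of the rest. -/
theorem exists_greedy_chain (Ω : Finset ι) (Good : σ → Finset ι → Finset ι → Prop)
    {θ : ℕ → ℝ} (hθ : ∀ c, 0 < θ c)
    (step : ∀ d C a T, (∀ c ∈ C, c < a) → (∀ t ∈ T, a < t) → insert a T ⊆ Ω →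
      Good d C (insert a T) → ∃ d', ∃ T' ⊆ T, θ #C * #T ≤ #T' ∧ Good d' (insert a C) T')
    (n : ℕ) {d : σ} {C T : Finset ι} (hCT : ∀ c ∈ C, ∀ t ∈ T, c < t) (hTΩ : T ⊆ Ω)
    (hT : greedyBound θ n #C ≤ #T) (hd : Good d C T) :
    ∃ d', ∃ C' ⊆ C ∪ T, #C' = #C + n ∧ ∃ T', Good d' C' T' := by
  induction n generalizing d C T with
  | zero => exact ⟨d, C, subset_union_left, rfl, T, hd⟩
  | succ n ih =>
    simp only [greedyBound] at hT
    have hTne : T.Nonempty := card_pos.1 (by omega)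
    set a := T.min' hTne
    have haT : a ∈ T := T.min'_mem hTne
    have haC : a ∉ C := fun h => lt_irrefl a (hCT a h a haT)
    obtain ⟨d', T', hT'T, hT', hd'⟩ := step d C a (T.erase a) (fun c hc => hCT c hc a haT)
      (fun t ht => T.min'_lt_of_mem_erase_min' hTne ht) (by rwa [insert_erase haT])
      (by rwa [insert_erase haT])
    have hbound : greedyBound θ n (#C + 1) ≤ #T' := by
      have hceil : ⌈(greedyBound θ n (#C + 1) : ℝ) / θ #C⌉₊ ≤ #(T.erase a) := by
        rw [card_erase_of_mem haT]; omega
      have := Nat.ceil_le.1 hceil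
      rw [div_le_iff₀ (hθ _)] at this
      have hreal : (greedyBound θ n (#C + 1) : ℝ) ≤ #T' := by
        linarith [mul_comm (θ #C) (#(T.erase a) : ℝ)]
      exact_mod_cast hreal
    have hlt : ∀ c ∈ insert a C, ∀ t ∈ T', c < t := by
      intro c hc t ht
      have ht' : t ∈ T.erase a := hT'T ht
      rcases mem_insert.1 hc with rfl | hcC
      · exact T.min'_lt_of_mem_erase_min' hTne ht'
      · exact hCT c hcC t (mem_of_mem_erase ht')
    obtain ⟨d'', C', hC', hC'card, hgood⟩ := ih hlt (hT'T.trans ((erase_subset a T).trans hTΩ))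
      (by rwa [card_insert_of_notMem haC]) hd'
    refine ⟨d'', C', hC'.trans ?_, by rw [hC'card, card_insert_of_notMem haC]; ring, hgood⟩
    calc insert a C ∪ T' ⊆ C ∪ insert a (T.erase a) := insert_union_subset_union_insert a hT'T
      _ = C ∪ T := by rw [insert_erase haT]

end Greedy

section CrossEdges

variable {ι α : Type*} [LinearOrder ι] [DecidableEq α]

def HasLargeDegrees (X : ι → Finset α) (L : ι → ι → Finset (α × α)) (ε : ℝ) (b : ι → α)
    (C T : Finset ι) : Prop :=
  ∀ r ∈ C, b r ∈ X r ∧ ∀ t ∈ C ∪ T, r < t → ε * #(X t) ≤ #{z ∈ X t | (b r, z) ∈ L r t}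

variable {X : ι → Finset α} {L : ι → ι → Finset (α × α)} {δ : ℝ} {b : ι → α} {C T : Finset ι}

lemma HasLargeDegrees.extend {a : ι} (hδ : 0 ≤ δ) (hX : ∀ i ∈ insert a T, (X i).Nonempty)
    (hL : ∀ t ∈ T, L a t ⊆ X a ×ˢ X t) (hdense : ∀ t ∈ T, δ * #(X a) * #(X t) ≤ #(L a t))
    (hCa : ∀ c ∈ C, c < a) (hb : HasLargeDegrees X L (δ / 2) b C (insert a T)) :
    ∃ b', ∃ T' ⊆ T, δ / 2 * #T ≤ #T' ∧ HasLargeDegrees X L (δ / 2) b' (insert a C) T' := by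
  obtain ⟨y, hy, T', hT'T, hT', hyT'⟩ := exists_mem_forall_dense_of_dense hδ
    (hX a (mem_insert_self a T)) (fun t ht => hX t (mem_insert_of_mem ht)) hL hdense
  refine ⟨Function.update b a y, T', hT'T, hT', fun r hr => ?_⟩
  rcases mem_insert.1 hr with rfl | hrC
  · simp only [Function.update_self]
    exact ⟨hy, fun t ht hrt => hyT' t (mem_of_mem_insert_union_of_lt hCa ht hrt)⟩
  · rw [Function.update_of_ne (hCa r hrC).ne]
    exact ⟨(hb r hrC).1, fun t ht => (hb r hrC).2 t (insert_union_subset_union_insert a hT'T ht)⟩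

lemma HasLargeDegrees.exists_commonNeighbour {S : Finset ι} {t : ι} {m : ℕ}
    (hb : HasLargeDegrees X L (δ / 2) b C T) (hSC : S ⊆ C) (htC : t ∈ C) (hSt : ∀ s ∈ S, s < t)
    (hXt : (X t).Nonempty) (hS : m ≤ δ / 2 * #S) :
    ∃ K ⊆ S, #K = m ∧ ∃ z ∈ X t, ∀ r ∈ K, (b r, z) ∈ L r t := by
  obtain ⟨z, hz, hzS⟩ := exists_le_card_bipartiteBelow (fun r z => (b r, z) ∈ L r t) hXt
    fun r hr => (hb r (hSC hr)).2 t (mem_union_left T htC) (hSt r hr)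
  obtain ⟨K, hKS, hK⟩ := exists_subset_card_eq (show m ≤ #(S.bipartiteBelow _ z) by
    exact_mod_cast hS.trans hzS)
  exact ⟨K, hKS.trans (filter_subset _ _), hK, z, hz, fun r hr => (mem_filter.1 (hKS hr)).2⟩

theorem exists_cross_edges_of_dense [Nonempty α] {δ : ℝ} (hδ : 0 < δ) (m : ℕ) :
    ∃ n, ∀ (I : Finset ι) (X : ι → Finset α) (L : ι → ι → Finset (α × α)), n ≤ #I →
      (∀ i ∈ I, (X i).Nonempty) → (∀ r ∈ I, ∀ s ∈ I, r < s → L r s ⊆ X r ×ˢ X s) →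
      (∀ r ∈ I, ∀ s ∈ I, r < s → δ * #(X r) * #(X s) ≤ #(L r s)) →
      ∃ J ⊆ I, #J = m ∧ ∃ b g : ι → α, (∀ j ∈ J, b j ∈ X j ∧ g j ∈ X j) ∧
        ∀ r ∈ J, ∀ s ∈ J, r < s → (b r, g s) ∈ L r s := by
  obtain ⟨N, hN⟩ := exists_subset_forall_filter_lt (ι := ι) ⌈2 * m / δ⌉₊ m
  refine ⟨greedyBound (fun _ => δ / 2) N 0, fun I X L hI hX hL hdense => ?_⟩
  obtain ⟨b, C, hCI, hC, T, hb⟩ := exists_greedy_chain I (HasLargeDegrees X L (δ / 2))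
    (fun _ => half_pos hδ)
    (fun b C a T hCa haT haTI hb => hb.extend hδ.le (fun i hi => hX i (haTI hi))
      (fun t ht => hL a (haTI (mem_insert_self a T)) t (haTI (mem_insert_of_mem ht)) (haT t ht))
      (fun t ht => hdense a (haTI (mem_insert_self a T)) t (haTI (mem_insert_of_mem ht))
        (haT t ht)) hCa)
    N (d := fun _ => Classical.arbitrary α) (C := ∅) (by simp) subset_rfl (by simpa using hI)
    (by simp [HasLargeDegrees])
  rw [empty_union] at hCI
  rw [card_empty, zero_add] at hC
  have hpool : (m : ℝ) ≤ δ / 2 * ⌈2 * m / δ⌉₊ := by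
    have := Nat.le_ceil (2 * m / δ)
    rw [div_le_iff₀ hδ] at this
    linarith
  obtain ⟨J, hJC, hJ, hg⟩ := hN (fun K t => ∃ z ∈ X t, ∀ r ∈ K, (b r, z) ∈ L r t)
    (fun t K K' hKK' ⟨z, hz, hzK⟩ => ⟨z, hz, fun r hr => hzK r (hKK' hr)⟩) C hC.ge
    fun S hSC hS t htC hSt => hb.exists_commonNeighbour hSC htC hSt (hX t (hCI htC))
      (by rwa [hS])
  choose! g hgX hgL using hg
  exact ⟨J, hJC.trans hCI, hJ, b, g, fun j hj => ⟨(hb j (hJC hj)).1, hgX j hj⟩,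
    fun r hr s hs hrs => hgL s hs r (mem_filter.2 ⟨hr, hrs⟩)⟩

end CrossEdges

namespace ReducedHG

variable {q : ℕ} (R : ReducedHG q)

def link (x i j t : ℕ) : Finset (ℕ × ℕ) :=
  {yz ∈ R.P i t ×ˢ R.P j t | (x, yz) ∈ R.A i j t}

def HasDenseLinks (ε : ℝ) (red : ℕ → ℕ → ℕ) (C T : Finset ℕ) : Prop :=
  ∀ i ∈ C, ∀ j ∈ C, i < j → red i j ∈ R.P i j ∧
    ∀ t ∈ C ∪ T, j < t → ε * #(R.P i t) * #(R.P j t) ≤ #(R.link (red i j) i j t)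

def HasBlueGreen (red : ℕ → ℕ → ℕ) (K : Finset ℕ) (t : ℕ) : Prop :=
  ∃ b g : ℕ → ℕ, (∀ r ∈ K, b r ∈ R.P r t ∧ g r ∈ R.P r t) ∧
    ∀ r ∈ K, ∀ s ∈ K, r < s → (red r s, b r, g s) ∈ R.A r s t

lemma antitone_hasBlueGreen (red : ℕ → ℕ → ℕ) (t : ℕ) : Antitone (R.HasBlueGreen red · t) :=
  fun _ _ hKK' ⟨b, g, hbg, hA⟩ =>
    ⟨b, g, fun r hr => hbg r (hKK' hr), fun r hr s hs => hA r (hKK' hr) s (hKK' hs)⟩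

variable {R} {η : ℝ} {red : ℕ → ℕ → ℕ} {C T : Finset ℕ}

lemma HasDenseLinks.extend {a : ℕ} (hη : 0 ≤ η) (hD : R.Dense η) (hCa : ∀ c ∈ C, c < a)
    (haT : ∀ t ∈ T, a < t) (haTq : insert a T ⊆ range q)
    (hred : R.HasDenseLinks (η / 2) red C (insert a T)) :
    ∃ red', ∃ T' ⊆ T, (η / 2) ^ #C * #T ≤ #T' ∧ R.HasDenseLinks (η / 2) red' (insert a C) T' := by
  have haq : a < q := mem_range.1 (haTq (mem_insert_self a T))
  have htq : ∀ t ∈ T, t < q := fun t ht => mem_range.1 (haTq (mem_insert_of_mem ht))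
  obtain ⟨x, T', hT'T, hT', hx⟩ := exists_forall_mem_forall_dense_of_dense C
    (V := fun c => R.P c a) (Y := fun c t => R.P c t ×ˢ R.P a t) (E := fun c t => R.A c a t) hη
    (fun c hc => R.P_nonempty c a ((hCa c hc).trans haq) haq (hCa c hc).ne)
    (fun c hc t ht => (R.P_nonempty c t ((hCa c hc).trans haq) (htq t ht)
        ((hCa c hc).trans (haT t ht)).ne).product
      (R.P_nonempty a t haq (htq t ht) (haT t ht).ne))
    (fun c hc t ht e he => by
      obtain ⟨h1, h2, h3⟩ := R.A_sub c a t (hCa c hc) (haT t ht) (htq t ht) e he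
      exact mem_product.2 ⟨h1, mem_product.2 ⟨h2, h3⟩⟩)
    (fun c hc t ht => by
      rw [card_product, Nat.cast_mul, ← mul_assoc]
      exact hD c a t (hCa c hc) (haT t ht) (htq t ht))
  refine ⟨fun i j => if j = a then x i else red i j, T', hT'T, hT', fun i hi j hj hij => ?_⟩
  rcases mem_insert.1 hj with rfl | hjC
  · have hiC : i ∈ C := (mem_insert.1 hi).resolve_left hij.ne
    simp only [↓reduceIte]
    refine ⟨(hx i hiC).1, fun t ht hjt => ?_⟩
    have := (hx i hiC).2 t (mem_of_mem_insert_union_of_lt hCa ht hjt)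
    rwa [card_product, Nat.cast_mul, ← mul_assoc] at this
  · have hiC : i ∈ C := (mem_insert.1 hi).resolve_left fun h => (h ▸ hij).not_gt (hCa j hjC)
    simp only [if_neg (hCa j hjC).ne]
    exact ⟨(hred i hiC j hjC hij).1,
      fun t ht => (hred i hiC j hjC hij).2 t (insert_union_subset_union_insert a hT'T ht)⟩

lemma exists_hasDenseLinks (hη : 0 < η) (hD : R.Dense η) (N : ℕ)
    (hq : greedyBound (fun c => (η / 2) ^ c) N 0 ≤ q) :
    ∃ red C, C ⊆ range q ∧ #C = N ∧ ∃ T, R.HasDenseLinks (η / 2) red C T := by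
  obtain ⟨red, C, hC, hCcard, T, hred⟩ := exists_greedy_chain (range q) (R.HasDenseLinks (η / 2))
    (fun c => pow_pos (half_pos hη) c)
    (fun _ _ _ _ hCa haT haTq hred => hred.extend hη.le hD hCa haT haTq)
    N (d := fun _ _ => 0) (C := ∅) (by simp) subset_rfl (by simpa using hq)
    (by simp [HasDenseLinks])
  exact ⟨red, C, by simpa using hC, by simpa using hCcard, T, hred⟩

theorem exists_pool_bound_hasBlueGreen (hη : 0 < η) (h : ℕ) :
    ∃ n, ∀ {q} (R : ReducedHG q) {red C T}, R.HasDenseLinks (η / 2) red C T → C ⊆ range q →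
      ∀ S ⊆ C, #S = n → ∀ t ∈ C, (∀ s ∈ S, s < t) → ∃ K ⊆ S, #K = h ∧ R.HasBlueGreen red K t := by
  obtain ⟨n, hn⟩ := exists_cross_edges_of_dense (ι := ℕ) (α := ℕ) (half_pos hη) h
  refine ⟨n, ?_⟩
  intro q R red C T hred hCq S hSC hS t htC hSt
  have htq : t < q := mem_range.1 (hCq htC)
  obtain ⟨K, hKS, hK, b, g, hbg, hbgL⟩ := hn S (fun r => R.P r t)
    (fun r s => R.link (red r s) r s t) hS.ge
    (fun r hr => R.P_nonempty r t ((hSt r hr).trans htq) htq (hSt r hr).ne)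
    (fun r _ s _ _ => filter_subset _ _)
    (fun r hr s hs hrs => (hred r (hSC hr) s (hSC hs) hrs).2 t (mem_union_left T htC) (hSt s hs))
  exact ⟨K, hKS, hK, b, g, hbg, fun r hr s hs hrs => (mem_filter.1 (hbgL r hr s hs hrs)).2⟩

end ReducedHG

/-- Given `η > 0` and `h`, there is `q` such that every
`η`-dense reduced hypergraph with index set `[q]` contains indices
`λ(1) < ⋯ < λ(h)` and, for each pair `r < s`, vertices
`P^{λ(r)λ(s)}_red, P^{λ(r)λ(s)}_blue, P^{λ(r)λ(s)}_green ∈ P^{λ(r)λ(s)}` such that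
for all `r < s < t` the vertices `P^{λ(r)λ(s)}_red, P^{λ(r)λ(t)}_blue,
P^{λ(s)λ(t)}_green` form an edge of the constituent `A^{λ(r)λ(s)λ(t)}`. -/
theorem reduced_hypergraph_embedding (η : ℝ) (hη : 0 < η) (h : ℕ) :
    ∃ q : ℕ, ∀ R : ReducedHG q, R.Dense η →
      ∃ lam : Fin h → ℕ, StrictMono lam ∧ (∀ r, lam r < q) ∧
        ∃ Pr Pb Pg : ℕ → ℕ → ℕ,
          (∀ r s : Fin h, r < s →
            Pr (lam r) (lam s) ∈ R.P (lam r) (lam s) ∧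
            Pb (lam r) (lam s) ∈ R.P (lam r) (lam s) ∧
            Pg (lam r) (lam s) ∈ R.P (lam r) (lam s)) ∧
          ∀ r s t : Fin h, r < s → s < t →
            (Pr (lam r) (lam s), Pb (lam r) (lam t), Pg (lam s) (lam t)) ∈
              R.A (lam r) (lam s) (lam t) := by
  obtain ⟨n, hn⟩ := ReducedHG.exists_pool_bound_hasBlueGreen hη h
  obtain ⟨N, hN⟩ := exists_subset_forall_filter_lt (ι := ℕ) n h
  refine ⟨greedyBound (fun c => (η / 2) ^ c) N 0, fun R hD => ?_⟩
  obtain ⟨red, C, hCq, hC, T, hred⟩ := R.exists_hasDenseLinks hη hD N le_rfl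
  obtain ⟨Λ, hΛC, hΛ, hbg⟩ := hN _ (R.antitone_hasBlueGreen red) C hC.ge (hn R hred hCq)
  choose! B G hBG hA using hbg
  set lam := Λ.orderEmbOfFin hΛ
  have hlam : ∀ r, lam r ∈ Λ := fun r => orderEmbOfFin_mem Λ hΛ r
  have hbelow : ∀ {r s}, r < s → lam r ∈ {x ∈ Λ | x < lam s} := fun hrs =>
    mem_filter.2 ⟨hlam _, lam.strictMono hrs⟩
  refine ⟨lam, lam.strictMono, fun r => mem_range.1 (hCq (hΛC (hlam r))), red,
    fun r t => B t r, fun s t => G t s, fun r s hrs => ?_, fun r s t hrs hst => ?_⟩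
  · exact ⟨(hred _ (hΛC (hlam r)) _ (hΛC (hlam s)) (lam.strictMono hrs)).1,
      hBG _ (hlam s) _ (hbelow hrs)⟩
  · exact hA _ (hlam t) _ (hbelow (hrs.trans hst)) _ (hbelow hst) (lam.strictMono hrs)
end

section
/- Let F = K^{(3)}_{2,2,2} be the complete 3-partite 3-graph with all three parts of size two. Then every 2-shadow-disjoint bipartition {A, B} of V(F) satisfies (|A|, |B|) ∈ {(0,6), (2,4), (4,2), (6,0)}; consequently (1, −1) ∉ L²_F, i.e., K^{(3)}_{2,2,2} ∉ TRANS²_3. -/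
open scoped BigOperators

/-- A `k`-graph: a finite vertex set together with a set of `k`-element edges. -/
structure KGraph (k : ℕ) where
  verts : Finset ℕ
  edges : Finset (Finset ℕ)
  edges_sub : ∀ e ∈ edges, e ⊆ verts
  edges_card : ∀ e ∈ edges, e.card = k

namespace KGraph

variable {k : ℕ}

/-- The number of vertices `v(H)`. -/
def order (H : KGraph k) : ℕ := H.verts.card

/-- `e_H(X₁,…,X_k)`: the number of tuples `(x₁,…,x_k) ∈ X₁ × ⋯ × X_k`
whose underlying set is an edge of `H`. -/
noncomputable def eH (H : KGraph k) (X : Fin k → Finset ℕ) : ℕ :=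
  Set.ncard {x : Fin k → ℕ | (∀ i, x i ∈ X i) ∧ Finset.image x Finset.univ ∈ H.edges}

/-- `H` is `(p,μ)`-dense. -/
def IsDense (H : KGraph k) (p μ : ℝ) : Prop :=
  ∀ X : Fin k → Finset ℕ, (∀ i, X i ⊆ H.verts) →
    p * ∏ i : Fin k, ((X i).card : ℝ) - μ * (H.order : ℝ) ^ k ≤ (H.eH X : ℝ)

/-- The number of edges of `H` containing the vertex `v`. -/
noncomputable def degree (H : KGraph k) (v : ℕ) : ℕ :=
  Set.ncard {e : Finset ℕ | e ∈ H.edges ∧ v ∈ e}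

/-- Every vertex of `H` lies in at least `α·n^(k-1)` edges. -/
def MinDegAtLeast (H : KGraph k) (α : ℝ) : Prop :=
  ∀ v ∈ H.verts, α * (H.order : ℝ) ^ (k - 1) ≤ (H.degree v : ℝ)

/-- `φ` realizes a copy of `F` in `H` (an embedding of `F` into `H`). -/
def IsCopyMap (F H : KGraph k) (φ : ℕ → ℕ) : Prop :=
  Set.InjOn φ (F.verts : Set ℕ) ∧ (∀ v ∈ F.verts, φ v ∈ H.verts) ∧
    ∀ e ∈ F.edges, e.image φ ∈ H.edges

/-- `v` is covered by a copy of `F` in `H`. -/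
def InCopy (F H : KGraph k) (v : ℕ) : Prop :=
  ∃ φ : ℕ → ℕ, IsCopyMap F H φ ∧ v ∈ F.verts.image φ

/-- `P` records the vertex sets of a family of pairwise vertex-disjoint copies
of `F` in `H`: an `F`-tiling. -/
def IsTiling (F H : KGraph k) (P : Finset (Finset ℕ)) : Prop :=
  (P : Set (Finset ℕ)).PairwiseDisjoint id ∧
    ∀ S ∈ P, ∃ φ : ℕ → ℕ, IsCopyMap F H φ ∧ S = F.verts.image φ

/-- `H` has an `F`-factor. -/
def HasFactor (F H : KGraph k) : Prop :=
  ∃ P : Finset (Finset ℕ), IsTiling F H P ∧ P.biUnion id = H.verts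

/-- `F ∈ FACTOR_k`. -/
def Factor (F : KGraph k) : Prop :=
  ∀ p α : ℝ, 0 < p → p < 1 → 0 < α → α < 1 →
    ∃ n₀ : ℕ, ∃ μ : ℝ, 0 < μ ∧
      ∀ H : KGraph k, H.IsDense p μ → H.MinDegAtLeast α → n₀ ≤ H.order →
        F.order ∣ H.order → HasFactor F H

/-- `F ∈ COVER_k`. -/
def Cover (F : KGraph k) : Prop :=
  ∀ p α : ℝ, 0 < p → p < 1 → 0 < α → α < 1 →
    ∃ n₀ : ℕ, ∃ μ : ℝ, 0 < μ ∧
      ∀ H : KGraph k, H.IsDense p μ → H.MinDegAtLeast α → n₀ ≤ H.order →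
        ∀ v ∈ H.verts, InCopy F H v

/-- `H` contains no copy of `F`. -/
def FFree (F H : KGraph k) : Prop := ¬ ∃ φ : ℕ → ℕ, IsCopyMap F H φ

/-- The Turán density `π_dot(F)` relative to `(p,μ)`-dense host graphs. -/
noncomputable def piDot (F : KGraph k) : ℝ :=
  sSup {p : ℝ | p ∈ Set.Icc (0 : ℝ) 1 ∧
    ∀ μ : ℝ, 0 < μ → ∀ n₀ : ℕ, ∃ H : KGraph k,
      H.IsDense p μ ∧ n₀ ≤ H.order ∧ FFree F H}

/-- The subgraph of `H` induced on `S`. -/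
def induce (H : KGraph k) (S : Finset ℕ) : KGraph k where
  verts := H.verts ∩ S
  edges := H.edges.filter fun e => e ⊆ S
  edges_sub := by
    intro e he
    rw [Finset.mem_filter] at he
    exact Finset.subset_inter (H.edges_sub e he.1) he.2
  edges_card := by
    intro e he
    rw [Finset.mem_filter] at he
    exact H.edges_card e he.1

/-- The link `N_H(v)` of a vertex: the `(k-1)`-sets completing `v` to an edge. -/
def link (H : KGraph k) (v : ℕ) : Set (Finset ℕ) :=
  {S : Finset ℕ | v ∉ S ∧ insert v S ∈ H.edges}

/-- The number of copies of `F` in `H` (recorded as subgraphs, i.e. by vertex set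
and edge set) that contain the vertex `w`. -/
noncomputable def copiesThrough (F H : KGraph k) (w : ℕ) : ℕ :=
  Set.ncard {c : Finset ℕ × Finset (Finset ℕ) |
    ∃ φ : ℕ → ℕ, IsCopyMap F H φ ∧ c.1 = F.verts.image φ ∧
      c.2 = F.edges.image (fun e => e.image φ) ∧ w ∈ c.1}

/-- The number of `(i·v(F)−1)`-sets `W` witnessing `(F,β,i)`-reachability of `u,v`. -/
noncomputable def reachCount (F H : KGraph k) (i : ℕ) (u v : ℕ) : ℕ :=
  Set.ncard {W : Finset ℕ | W ⊆ H.verts ∧ W.card = i * F.order - 1 ∧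
    HasFactor F (H.induce (insert u W)) ∧ HasFactor F (H.induce (insert v W))}

/-- `u` and `v` are `(F,β,i)`-reachable in `H`. -/
def Reachable (F H : KGraph k) (β : ℝ) (i : ℕ) (u v : ℕ) : Prop :=
  β * (H.order : ℝ) ^ (i * F.order - 1) ≤ (reachCount F H i u v : ℝ)

/-- `Ñ_{F,β,i}(x)`: the vertices of `H` that are `(F,β,i)`-reachable to `x`. -/
def tildeN (F H : KGraph k) (β : ℝ) (i : ℕ) (x : ℕ) : Set ℕ :=
  {v : ℕ | v ∈ H.verts ∧ Reachable F H β i x v}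

/-- A vertex set `A` is `(F,β,i)`-closed in `H`. -/
def ClosedIn (F H : KGraph k) (β : ℝ) (i : ℕ) (A : Finset ℕ) : Prop :=
  ∀ u ∈ A, ∀ v ∈ A, Reachable F H β i u v

end KGraph

open KGraph

namespace KGraph

variable {k : ℕ}

/-- The number of edges of `H` containing the set `S`. -/
noncomputable def degSet (H : KGraph k) (S : Finset ℕ) : ℕ :=
  Set.ncard {e : Finset ℕ | e ∈ H.edges ∧ S ⊆ e}

/-- `δ_s(H) ≥ α n^(k−s)`: every `s`-subset of vertices lies in at least
`α·n^(k−s)` edges. -/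
def MinDegSAtLeast (H : KGraph k) (s : ℕ) (α : ℝ) : Prop :=
  ∀ S : Finset ℕ, S ⊆ H.verts → S.card = s →
    α * (H.order : ℝ) ^ (k - s) ≤ (degSet H S : ℝ)

/-- `{A, B}` is an `s`-shadow-disjoint bipartition of `V(F)`: any two edges with
different index vectors share fewer than `s` vertices. -/
def ShadowDisjointBipartition (F : KGraph k) (s : ℕ) (A B : Finset ℕ) : Prop :=
  Disjoint A B ∧ A ∪ B = F.verts ∧
    ∀ e ∈ F.edges, ∀ e' ∈ F.edges,
      ((e ∩ A).card, (e ∩ B).card) ≠ ((e' ∩ A).card, (e' ∩ B).card) →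
      (e ∩ e').card < s

/-- `L^s_F`: the subgroup of `ℤ²` generated by the index vectors `(|A|, |B|)` of
all `s`-shadow-disjoint bipartitions of `V(F)`. -/
def latticeS (F : KGraph k) (s : ℕ) : AddSubgroup (ℤ × ℤ) :=
  AddSubgroup.closure {v : ℤ × ℤ | ∃ A B : Finset ℕ,
    ShadowDisjointBipartition F s A B ∧ v = ((A.card : ℤ), (B.card : ℤ))}

end KGraph

/-- Auxiliary: the subgroup of `ℤ × ℤ` of pairs with even first coordinate. -/
def evenFstSubgroup : AddSubgroup (ℤ × ℤ) where
  carrier := {p | (2 : ℤ) ∣ p.1}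
  zero_mem' := ⟨0, rfl⟩
  add_mem' := fun h1 h2 => by exact dvd_add h1 h2
  neg_mem' := fun h => by exact dvd_neg.2 h

lemma triple_inter_a {a x y : ℕ} {S : Finset ℕ} (ha : a ∈ S) (hx : x ∉ S) (hy : y ∉ S) :
    ({a, x, y} : Finset ℕ) ∩ S = {a} := by
  ext z
  simp only [Finset.mem_inter, Finset.mem_insert, Finset.mem_singleton]
  constructor
  · rintro ⟨rfl | rfl | rfl, h2⟩
    · rfl
    · exact absurd h2 hx
    · exact absurd h2 hy
  · rintro rfl; exact ⟨Or.inl rfl, ha⟩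

lemma triple_inter_b {a x y : ℕ} {S : Finset ℕ} (ha : a ∉ S) (hx : x ∈ S) (hy : y ∉ S) :
    ({a, x, y} : Finset ℕ) ∩ S = {x} := by
  ext z
  simp only [Finset.mem_inter, Finset.mem_insert, Finset.mem_singleton]
  constructor
  · rintro ⟨rfl | rfl | rfl, h2⟩
    · exact absurd h2 ha
    · rfl
    · exact absurd h2 hy
  · rintro rfl; exact ⟨Or.inr (Or.inl rfl), hx⟩

lemma triple_inter_c {a x y : ℕ} {S : Finset ℕ} (ha : a ∉ S) (hx : x ∉ S) (hy : y ∈ S) :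
    ({a, x, y} : Finset ℕ) ∩ S = {y} := by
  ext z
  simp only [Finset.mem_inter, Finset.mem_insert, Finset.mem_singleton]
  constructor
  · rintro ⟨rfl | rfl | rfl, h2⟩
    · exact absurd h2 ha
    · exact absurd h2 hx
    · rfl
  · rintro rfl; exact ⟨Or.inr (Or.inr rfl), hy⟩

/-- For `F = K^{(3)}_{2,2,2}` (the complete 3-partite 3-graph
with parts `W 0, W 1, W 2` of size two), every 2-shadow-disjoint bipartition
`{A, B}` of `V(F)` has `(|A|, |B|) ∈ {(0,6), (2,4), (4,2), (6,0)}`; consequently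
`(1, −1) ∉ L²_F`, i.e. `K^{(3)}_{2,2,2} ∉ TRANS²_3`. -/
theorem K222_not_in_trans (F : KGraph 3) (W : Fin 3 → Finset ℕ)
    (hcard : ∀ i, (W i).card = 2)
    (hdisj : ∀ i j, i ≠ j → Disjoint (W i) (W j))
    (hunion : Finset.univ.biUnion W = F.verts)
    (hedges : ∀ e : Finset ℕ,
      e ∈ F.edges ↔ (e ⊆ F.verts ∧ ∀ i, (e ∩ W i).card = 1)) :
    (∀ A B : Finset ℕ, ShadowDisjointBipartition F 2 A B →
      (A.card, B.card) ∈ ({(0, 6), (2, 4), (4, 2), (6, 0)} : Set (ℕ × ℕ))) ∧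
    ((1 : ℤ), (-1 : ℤ)) ∉ latticeS F 2 := by
  have hWsub : ∀ i, W i ⊆ F.verts := by
    intro i z hz
    rw [← hunion]
    exact Finset.mem_biUnion.2 ⟨i, Finset.mem_univ i, hz⟩
  have hfin3 : ∀ i : Fin 3, ∃ j k : Fin 3, i ≠ j ∧ i ≠ k ∧ j ≠ k := by decide
  have hcover : ∀ i j k m : Fin 3, i ≠ j → i ≠ k → j ≠ k → (m = i ∨ m = j ∨ m = k) := by decide
  have part1 : ∀ A B : Finset ℕ, ShadowDisjointBipartition F 2 A B →
      (A.card, B.card) ∈ ({(0, 6), (2, 4), (4, 2), (6, 0)} : Set (ℕ × ℕ)) := by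
    rintro A B ⟨hAB, hU, hsd⟩
    have hmono : ∀ i, W i ⊆ A ∨ W i ⊆ B := by
      intro i
      by_contra hc
      push_neg at hc
      obtain ⟨b, hbW, hbA⟩ := Finset.not_subset.1 hc.1
      obtain ⟨a, haW, haB⟩ := Finset.not_subset.1 hc.2
      have hmemAB : ∀ z ∈ W i, z ∈ A ∪ B := fun z hz => hU ▸ hWsub i hz
      have haA : a ∈ A := by
        rcases Finset.mem_union.1 (hmemAB a haW) with h | h
        · exact h
        · exact absurd h haB
      have hbB : b ∈ B := by
        rcases Finset.mem_union.1 (hmemAB b hbW) with h | h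
        · exact absurd h hbA
        · exact h
      obtain ⟨j, k, hij, hik, hjk⟩ := hfin3 i
      obtain ⟨x, hxW⟩ := Finset.card_pos.1 (by rw [hcard j]; norm_num)
      obtain ⟨y, hyW⟩ := Finset.card_pos.1 (by rw [hcard k]; norm_num)
      -- non-memberships
      have haWj : a ∉ W j := Finset.disjoint_left.1 (hdisj i j hij) haW
      have haWk : a ∉ W k := Finset.disjoint_left.1 (hdisj i k hik) haW
      have hbWj : b ∉ W j := Finset.disjoint_left.1 (hdisj i j hij) hbW
      have hbWk : b ∉ W k := Finset.disjoint_left.1 (hdisj i k hik) hbW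
      have hxWi : x ∉ W i := Finset.disjoint_left.1 (hdisj j i hij.symm) hxW
      have hxWk : x ∉ W k := Finset.disjoint_left.1 (hdisj j k hjk) hxW
      have hyWi : y ∉ W i := Finset.disjoint_left.1 (hdisj k i hik.symm) hyW
      have hyWj : y ∉ W j := Finset.disjoint_left.1 (hdisj k j hjk.symm) hyW
      have hax : a ≠ x := fun h => hxWi (h ▸ haW)
      have hay : a ≠ y := fun h => hyWi (h ▸ haW)
      have hxy : x ≠ y := fun h => hyWj (h ▸ hxW)
      -- the two edges
      have hcards : ∀ z : ℕ, z ∈ W i → ∀ m : Fin 3,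
          (({z, x, y} : Finset ℕ) ∩ W m).card = 1 := by
        intro z hzW m
        have hzWj : z ∉ W j := Finset.disjoint_left.1 (hdisj i j hij) hzW
        have hzWk : z ∉ W k := Finset.disjoint_left.1 (hdisj i k hik) hzW
        rcases hcover i j k m hij hik hjk with rfl | rfl | rfl
        · rw [triple_inter_a hzW hxWi hyWi]; exact Finset.card_singleton _
        · rw [triple_inter_b hzWj hxW hyWj]; exact Finset.card_singleton _
        · rw [triple_inter_c hzWk hxWk hyW]; exact Finset.card_singleton _
      have hsub : ∀ z : ℕ, z ∈ W i → ({z, x, y} : Finset ℕ) ⊆ F.verts := by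
        intro z hzW
        simp only [Finset.insert_subset_iff, Finset.singleton_subset_iff]
        exact ⟨hWsub i hzW, hWsub j hxW, hWsub k hyW⟩
      have he : ({a, x, y} : Finset ℕ) ∈ F.edges :=
        (hedges _).2 ⟨hsub a haW, hcards a haW⟩
      have he' : ({b, x, y} : Finset ℕ) ∈ F.edges :=
        (hedges _).2 ⟨hsub b hbW, hcards b hbW⟩
      have hbA' : b ∉ A := Finset.disjoint_right.1 hAB hbB
      have hcA : (({a, x, y} : Finset ℕ) ∩ A).card = (({x, y} : Finset ℕ) ∩ A).card + 1 := by
        rw [show ({a, x, y} : Finset ℕ) = insert a {x, y} from rfl,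
          Finset.insert_inter_of_mem haA, Finset.card_insert_of_notMem]
        intro h
        rcases Finset.mem_inter.1 h with ⟨h1, _⟩
        rcases Finset.mem_insert.1 h1 with h2 | h2
        · exact hax h2
        · exact hay (Finset.mem_singleton.1 h2)
      have hcA' : (({b, x, y} : Finset ℕ) ∩ A).card = (({x, y} : Finset ℕ) ∩ A).card := by
        rw [show ({b, x, y} : Finset ℕ) = insert b {x, y} from rfl,
          Finset.insert_inter_of_notMem hbA']
      have hne : ((({a, x, y} : Finset ℕ) ∩ A).card, (({a, x, y} : Finset ℕ) ∩ B).card) ≠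
          ((({b, x, y} : Finset ℕ) ∩ A).card, (({b, x, y} : Finset ℕ) ∩ B).card) := by
        intro h
        rw [Prod.mk.injEq] at h
        omega
      have hlt := hsd _ he _ he' hne
      have hsub2 : ({x, y} : Finset ℕ) ⊆ ({a, x, y} : Finset ℕ) ∩ ({b, x, y} : Finset ℕ) := by
        intro z hz
        rcases Finset.mem_insert.1 hz with rfl | hz
        · simp
        · rw [Finset.mem_singleton.1 hz]; simp
      have h2le : 2 ≤ (({a, x, y} : Finset ℕ) ∩ ({b, x, y} : Finset ℕ)).card := by
        calc 2 = ({x, y} : Finset ℕ).card := (Finset.card_pair hxy).symm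
        _ ≤ _ := Finset.card_le_card hsub2
      omega
    -- cardinality computations
    have hAsub : A ⊆ F.verts := hU ▸ Finset.subset_union_left
    have hAeq : A = Finset.univ.biUnion (fun i => A ∩ W i) := by
      ext z
      simp only [Finset.mem_biUnion, Finset.mem_univ, true_and, Finset.mem_inter]
      constructor
      · intro hz
        have hzv : z ∈ F.verts := hAsub hz
        rw [← hunion] at hzv
        obtain ⟨i, _, hi⟩ := Finset.mem_biUnion.1 hzv
        exact ⟨i, hz, hi⟩
      · rintro ⟨i, hz, _⟩; exact hz
    have hAcard : A.card = ∑ i : Fin 3, (A ∩ W i).card := by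
      conv_lhs => rw [hAeq]
      rw [Finset.card_biUnion]
      intro i _ j _ hij
      exact (hdisj i j hij).mono Finset.inter_subset_right Finset.inter_subset_right
    have hterm : ∀ i, (A ∩ W i).card = 0 ∨ (A ∩ W i).card = 2 := by
      intro i
      rcases hmono i with h | h
      · right; rw [Finset.inter_eq_right.2 h]; exact hcard i
      · left
        rw [Finset.card_eq_zero, ← Finset.disjoint_iff_inter_eq_empty]
        exact hAB.mono_right h
    have hV6 : F.verts.card = 6 := by
      rw [← hunion, Finset.card_biUnion (fun i _ j _ hij => hdisj i j hij)]
      simp [hcard]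
    have hsum : A.card + B.card = 6 := by
      rw [← Finset.card_union_of_disjoint hAB, hU, hV6]
    rw [Fin.sum_univ_three] at hAcard
    have h0 := hterm 0
    have h1 := hterm 1
    have h2 := hterm 2
    simp only [Set.mem_insert_iff, Set.mem_singleton_iff, Prod.mk.injEq]
    omega
  refine ⟨part1, ?_⟩
  intro hmem
  have hle : latticeS F 2 ≤ evenFstSubgroup := by
    rw [latticeS, AddSubgroup.closure_le]
    rintro v ⟨A, B, hsd, rfl⟩
    have := part1 A B hsd
    simp only [Set.mem_insert_iff, Set.mem_singleton_iff, Prod.mk.injEq] at this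
    show (2 : ℤ) ∣ (A.card : ℤ)
    omega
  have : (2 : ℤ) ∣ 1 := hle hmem
  omega
end
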